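/- arXiv:1708.08183 — 2 statements merged into one kernel-verified Lean document; each statement's English description precedes it below -/
import Mathlib

section
/- Let $V$ be a real vector space with a symmetric bilinear form $a$ and a symmetric positive semidefinite bilinear form $b$. Suppose $u$ satisfies $a(u,v)=\lambda b(u,v)$ for all $v\in V$, and there is a constant $C\ge 0$ such that $b(w,w)\le C\, a(w,w)$ for all $w\in V$ (discrete Poincaré inequality), with $a$ positive semidefinite. If $\tilde\lambda = a(\tilde u,\tilde u)/b(\tilde u,\tilde u)$ with $b(\tilde u,\tilde u)>0$ and $\lambda \ge 0$, then $|\tilde\lambda-\lambda|\, b(\tilde u,\tilde u) \le (1+\lambda C)\, a(\tilde u - u, \tilde u - u)$. -/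
/-!
The form `a - λ b` is symmetric and has the eigenfunction `u` in its kernel, so its quadratic form
takes the same value at `ũ` and at `ũ - u`. At `ũ` that value is `(λ̃ - λ) b(ũ, ũ)`; at `ũ - u` it
lies between `-λ b(e, e)` and `a(e, e)` for `e = ũ - u`, and the Poincaré inequality bounds
`λ b(e, e)` by `λ C a(e, e)`.
-/

namespace LinearMap

variable {R M : Type*} [CommRing R] [AddCommGroup M] [Module R M]

theorem apply_sub_sub_eq_of_forall_apply_eq_zero (B : M →ₗ[R] M →ₗ[R] R)
    (hB : ∀ x y, B x y = B y x) {u : M} (hu : ∀ v, B u v = 0) (x : M) :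
    B (x - u) (x - u) = B x x := by
  simp only [map_sub, sub_apply, hu, hB x u]
  ring

end LinearMap

theorem abs_sub_mul_le_one_add_mul_mul {x y lam C : ℝ} (hx : 0 ≤ x) (hy : 0 ≤ y)
    (hyx : y ≤ C * x) (hlam : 0 ≤ lam) :
    |x - lam * y| ≤ (1 + lam * C) * x := by
  have hlamy : lam * y ≤ lam * C * x := by
    rw [mul_assoc]
    exact mul_le_mul_of_nonneg_left hyx hlam
  rw [abs_le]
  constructor <;> nlinarith [mul_nonneg hlam hy]

theorem rayleigh_quotient_bound_general {V : Type*} [AddCommGroup V] [Module ℝ V]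
    (a b : V →ₗ[ℝ] V →ₗ[ℝ] ℝ)
    (ha_symm : ∀ x y, a x y = a y x) (hb_symm : ∀ x y, b x y = b y x)
    (ha_psd : ∀ x, 0 ≤ a x x) (hb_psd : ∀ x, 0 ≤ b x x)
    (C : ℝ) (hpoincare : ∀ w, b w w ≤ C * a w w)
    (u ut : V) (lam : ℝ) (hlam : 0 ≤ lam)
    (hbut : 0 < b ut ut)
    (heig : ∀ v, a u v = lam * b u v)
    (tlam : ℝ) (htlam : tlam = a ut ut / b ut ut) :
    |tlam - lam| * b ut ut ≤ (1 + lam * C) * a (ut - u) (ut - u) := by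
  have hsymm : ∀ x y, (a - lam • b) x y = (a - lam • b) y x := fun x y => by
    simp only [LinearMap.sub_apply, LinearMap.smul_apply, ha_symm x y, hb_symm x y]
  have hker : ∀ v, (a - lam • b) u v = 0 := fun v => by
    simp only [LinearMap.sub_apply, LinearMap.smul_apply, heig, smul_eq_mul, sub_self]
  have hshift := (a - lam • b).apply_sub_sub_eq_of_forall_apply_eq_zero hsymm hker ut
  simp only [LinearMap.sub_apply, LinearMap.smul_apply, smul_eq_mul] at hshift
  calc |tlam - lam| * b ut ut = |a ut ut - lam * b ut ut| := by
        rw [← abs_of_pos hbut, ← abs_mul, abs_of_pos hbut, htlam, sub_mul,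
          div_mul_cancel₀ _ hbut.ne']
    _ = |a (ut - u) (ut - u) - lam * b (ut - u) (ut - u)| := by rw [hshift]
    _ ≤ (1 + lam * C) * a (ut - u) (ut - u) :=
      abs_sub_mul_le_one_add_mul_mul (ha_psd _) (hb_psd _) (hpoincare _) hlam

/-- Abstract Lemma 4.2 + discrete Poincaré inequality: the Rayleigh quotient
error is bounded by `(1 + lam * C)` times the `a`-energy of the eigenfunction
error. -/
theorem rayleigh_quotient_bound {V : Type*} [AddCommGroup V] [Module ℝ V]
    (a b : V →ₗ[ℝ] V →ₗ[ℝ] ℝ)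
    (ha_symm : ∀ x y, a x y = a y x) (hb_symm : ∀ x y, b x y = b y x)
    (ha_psd : ∀ x, 0 ≤ a x x) (hb_psd : ∀ x, 0 ≤ b x x)
    (C : ℝ) (hC : 0 ≤ C) (hpoincare : ∀ w, b w w ≤ C * a w w)
    (u ut : V) (lam : ℝ) (hlam : 0 ≤ lam)
    (hbut : 0 < b ut ut)
    (heig : ∀ v, a u v = lam * b u v)
    (tlam : ℝ) (htlam : tlam = a ut ut / b ut ut) :
    |tlam - lam| * b ut ut ≤ (1 + lam * C) * a (ut - u) (ut - u) :=
  rayleigh_quotient_bound_general a b ha_symm hb_symm ha_psd hb_psd C hpoincare u ut lam hlam hbut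
    heig tlam htlam
end

section
/- Let $V_h$ be a real inner product-type setting with a norm $\trb{\cdot}$ induced by a symmetric positive definite bilinear form $a_s$, and a seminorm $\|\cdot\|_b$ induced by a symmetric positive semidefinite form $b_w$ satisfying $\|v\|_b \le C_P \trb{v}$ for all $v$. Suppose $u_h$ satisfies $a_s(u_h, v) = \lambda_h b_w(u_h, v)$ for all $v \in V_h$, and $\tilde u_h$ satisfies $a_s(\tilde u_h, v) = \mu\, b_w(g, v)$ for all $v \in V_h$, for some $\mu \in \mathbb{R}$ and $g \in V_h$. Then $\trb{\tilde u_h - u_h}^2 = \mu\, b_w(g - u_h, \tilde u_h - u_h) + (\mu - \lambda_h) b_w(u_h, \tilde u_h - u_h)$, and consequently $\trb{\tilde u_h - u_h} \le C_P\big(|\mu|\,\|g - u_h\|_b + |\mu - \lambda_h|\,\|u_h\|_b\big)$. -/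
/-!
Subtracting the two defining equations, tested against `e = tuh - uh`, gives the identity.
Bounding its right-hand side by Cauchy–Schwarz for `bw` and then by the Poincaré inequality for
`e` yields `s ^ 2 ≤ CP * K * s` for `s = √(as e e)` and `K` the bracket of the estimate; dividing
by `s` gives the estimate.
-/

namespace LinearMap.BilinForm

variable {V : Type*} [AddCommGroup V] [Module ℝ V]

lemma abs_apply_le_sqrt_mul_sqrt (B : LinearMap.BilinForm ℝ V) (hB : ∀ x y, B x y = B y x)
    (hs : ∀ x, 0 ≤ B x x) (x y : V) :
    |B x y| ≤ √(B x x) * √(B y y) := by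
  rw [← Real.sqrt_mul (hs x)]
  exact Real.abs_le_sqrt (B.apply_sq_le_of_symm hs (LinearMap.isSymm_def.mpr hB) x y)

lemma abs_add_apply_le (B : LinearMap.BilinForm ℝ V) (hB : ∀ x y, B x y = B y x)
    (hs : ∀ x, 0 ≤ B x x) (a b : ℝ) (x y e : V) :
    |a * B x e + b * B y e| ≤ (|a| * √(B x x) + |b| * √(B y y)) * √(B e e) := by
  calc |a * B x e + b * B y e| ≤ |a| * |B x e| + |b| * |B y e| := by
        simpa only [abs_mul] using abs_add_le (a * B x e) (b * B y e)
    _ ≤ |a| * (√(B x x) * √(B e e)) + |b| * (√(B y y) * √(B e e)) := by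
        gcongr <;> exact B.abs_apply_le_sqrt_mul_sqrt hB hs _ _
    _ = (|a| * √(B x x) + |b| * √(B y y)) * √(B e e) := by ring

/-- A Poincaré-type constant can be negative only when the seminorm vanishes identically. -/
lemma mul_sqrt_nonneg_of_sqrt_le {A B : LinearMap.BilinForm ℝ V} {C : ℝ}
    (hC : ∀ v, √(B v v) ≤ C * √(A v v)) (v : V) :
    0 ≤ C * √(B v v) := by
  rcases le_or_gt 0 C with hC0 | hC0
  · positivity
  · have hzero : √(B v v) = 0 :=
      le_antisymm ((hC v).trans (mul_nonpos_of_nonpos_of_nonneg hC0.le (Real.sqrt_nonneg _)))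
        (Real.sqrt_nonneg _)
    rw [hzero, mul_zero]

end LinearMap.BilinForm

lemma apply_sub_eq_of_eigen_of_source {V : Type*} [AddCommGroup V] [Module ℝ V]
    (as bw : LinearMap.BilinForm ℝ V) {uh tuh g : V} {lamh mu : ℝ}
    (heig : ∀ v, as uh v = lamh * bw uh v) (hsrc : ∀ v, as tuh v = mu * bw g v) (v : V) :
    as (tuh - uh) v = mu * bw (g - uh) v + (mu - lamh) * bw uh v := by
  simp only [map_sub, LinearMap.sub_apply, hsrc, heig]
  ring

lemma le_of_sq_le_mul {s c : ℝ} (hc : 0 ≤ c) (h : s ^ 2 ≤ c * s) : s ≤ c := by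
  nlinarith

theorem two_grid_correction_error_general {V : Type*} [AddCommGroup V] [Module ℝ V]
    (as bw : V →ₗ[ℝ] V →ₗ[ℝ] ℝ)
    (hbw_symm : ∀ x y, bw x y = bw y x)
    (has_psd : ∀ v, 0 ≤ as v v)
    (hbw_psd : ∀ v, 0 ≤ bw v v)
    (CP : ℝ)
    (hpoincare : ∀ v, Real.sqrt (bw v v) ≤ CP * Real.sqrt (as v v))
    (uh tuh g : V) (lamh mu : ℝ)
    (heig : ∀ v, as uh v = lamh * bw uh v)
    (hsrc : ∀ v, as tuh v = mu * bw g v) :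
    Real.sqrt (as (tuh - uh) (tuh - uh)) ^ 2
        = mu * bw (g - uh) (tuh - uh) + (mu - lamh) * bw uh (tuh - uh) ∧
    Real.sqrt (as (tuh - uh) (tuh - uh))
        ≤ CP * (|mu| * Real.sqrt (bw (g - uh) (g - uh))
            + |mu - lamh| * Real.sqrt (bw uh uh)) := by
  set e := tuh - uh
  set K := |mu| * √(bw (g - uh) (g - uh)) + |mu - lamh| * √(bw uh uh)
  have hidentity : √(as e e) ^ 2 = mu * bw (g - uh) e + (mu - lamh) * bw uh e := by
    rw [Real.sq_sqrt (has_psd e)]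
    exact apply_sub_eq_of_eigen_of_source as bw heig hsrc e
  refine ⟨hidentity, le_of_sq_le_mul ?_ ?_⟩
  · have h₁ := LinearMap.BilinForm.mul_sqrt_nonneg_of_sqrt_le hpoincare (g - uh)
    have h₂ := LinearMap.BilinForm.mul_sqrt_nonneg_of_sqrt_le hpoincare uh
    calc 0 ≤ |mu| * (CP * √(bw (g - uh) (g - uh))) + |mu - lamh| * (CP * √(bw uh uh)) :=
          add_nonneg (mul_nonneg (abs_nonneg _) h₁) (mul_nonneg (abs_nonneg _) h₂)
      _ = CP * K := by ring
  · calc √(as e e) ^ 2 ≤ |mu * bw (g - uh) e + (mu - lamh) * bw uh e| := hidentity ▸ le_abs_self _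
      _ ≤ K * √(bw e e) :=
          LinearMap.BilinForm.abs_add_apply_le bw hbw_symm hbw_psd mu (mu - lamh) (g - uh) uh e
      _ ≤ K * (CP * √(as e e)) := by gcongr; exact hpoincare e
      _ = CP * K * √(as e e) := by ring

/-- Abstract key computation in Lemma 4.3 / Lemma 5.2: the error between the
two-grid correction `tuh` (solving a source problem with data `μ g`) and the
direct discrete eigenfunction `uh` satisfies an identity and is controlled by
the data errors. -/
theorem two_grid_correction_error {V : Type*} [AddCommGroup V] [Module ℝ V]
    (as bw : V →ₗ[ℝ] V →ₗ[ℝ] ℝ)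
    (has_symm : ∀ x y, as x y = as y x) (hbw_symm : ∀ x y, bw x y = bw y x)
    (has_pd : ∀ v, v ≠ 0 → 0 < as v v) (has_psd : ∀ v, 0 ≤ as v v)
    (hbw_psd : ∀ v, 0 ≤ bw v v)
    (CP : ℝ)
    (hpoincare : ∀ v, Real.sqrt (bw v v) ≤ CP * Real.sqrt (as v v))
    (uh tuh g : V) (lamh mu : ℝ)
    (heig : ∀ v, as uh v = lamh * bw uh v)
    (hsrc : ∀ v, as tuh v = mu * bw g v) :
    Real.sqrt (as (tuh - uh) (tuh - uh)) ^ 2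
        = mu * bw (g - uh) (tuh - uh) + (mu - lamh) * bw uh (tuh - uh) ∧
    Real.sqrt (as (tuh - uh) (tuh - uh))
        ≤ CP * (|mu| * Real.sqrt (bw (g - uh) (g - uh))
            + |mu - lamh| * Real.sqrt (bw uh uh)) :=
  two_grid_correction_error_general as bw hbw_symm has_psd hbw_psd CP hpoincare uh tuh g lamh mu
    heig hsrc
end
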